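/- Let A, B ∈ ℝ^{n×n} be such that every matrix in the interval hull I(A,B) is an N-matrix of the second category. Then for each nonzero x ∈ ℝ^n with x ≰ 0 and x ≱ 0, there exists an index i such that x_i (Cx)_i > 0 for all C ∈ I(A,B). -/

import Mathlib

open Matrix Finset

def IsPMatrix {n : ℕ} (A : Matrix (Fin n) (Fin n) ℝ) : Prop :=
  ∀ s : Finset (Fin n),
    0 < (A.submatrix (fun i : s => (i : Fin n)) (fun j : s => (j : Fin n))).det

def IsNMatrix {n : ℕ} (A : Matrix (Fin n) (Fin n) ℝ) : Prop :=
  ∀ s : Finset (Fin n), s.Nonempty →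
    (A.submatrix (fun i : s => (i : Fin n)) (fun j : s => (j : Fin n))).det < 0

def IsAlmostPMatrix {n : ℕ} (A : Matrix (Fin n) (Fin n) ℝ) : Prop :=
  (∀ s : Finset (Fin n), s.Nonempty → s ≠ Finset.univ →
    0 < (A.submatrix (fun i : s => (i : Fin n)) (fun j : s => (j : Fin n))).det) ∧
  A.det < 0

def IntervalHull {m n : ℕ} (A B : Matrix (Fin m) (Fin n) ℝ) :
    Set (Matrix (Fin m) (Fin n) ℝ) :=
  {C | ∀ i j, ∃ t : ℝ, t ∈ Set.Icc (0:ℝ) 1 ∧ C i j = t * A i j + (1 - t) * B i j}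

noncomputable def Iu {m n : ℕ} (A B : Matrix (Fin m) (Fin n) ℝ) : Matrix (Fin m) (Fin n) ℝ :=
  fun i j => max (A i j) (B i j)

noncomputable def Il {m n : ℕ} (A B : Matrix (Fin m) (Fin n) ℝ) : Matrix (Fin m) (Fin n) ℝ :=
  fun i j => min (A i j) (B i j)

noncomputable def Ic {m n : ℕ} (A B : Matrix (Fin m) (Fin n) ℝ) : Matrix (Fin m) (Fin n) ℝ :=
  fun i j => (A i j + B i j) / 2

noncomputable def Dlt {m n : ℕ} (A B : Matrix (Fin m) (Fin n) ℝ) : Matrix (Fin m) (Fin n) ℝ :=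
  fun i j => (Iu A B i j - Il A B i j) / 2

noncomputable def Iz {n : ℕ} (A B : Matrix (Fin n) (Fin n) ℝ) (z : Fin n → ℝ) :
    Matrix (Fin n) (Fin n) ℝ :=
  Ic A B - Matrix.diagonal z * Dlt A B * Matrix.diagonal z

def SignVec {n : ℕ} (z : Fin n → ℝ) : Prop := ∀ i, z i = 1 ∨ z i = -1

def BlockPattern {n : ℕ} (A : Matrix (Fin n) (Fin n) ℝ) (J : Finset (Fin n)) : Prop :=
  (∀ i ∈ J, ∀ j ∈ J, A i j < 0) ∧ (∀ i ∉ J, ∀ j ∉ J, A i j < 0) ∧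
  (∀ i ∈ J, ∀ j ∉ J, 0 < A i j) ∧ (∀ i ∉ J, ∀ j ∈ J, 0 < A i j)

def IsNMatrixSecond {n : ℕ} (A : Matrix (Fin n) (Fin n) ℝ) : Prop :=
  IsNMatrix A ∧ ∀ i j, A i j ≤ 0

def IsNMatrixFirst {n : ℕ} (A : Matrix (Fin n) (Fin n) ℝ) (J : Finset (Fin n)) : Prop :=
  IsNMatrix A ∧ BlockPattern A J

def IsAlmostPSecond {n : ℕ} (A : Matrix (Fin n) (Fin n) ℝ) : Prop :=
  IsUnit A.det ∧ IsNMatrix A⁻¹ ∧ ∀ i j, A⁻¹ i j < 0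

def IsAlmostPFirst {n : ℕ} (A : Matrix (Fin n) (Fin n) ℝ) (J : Finset (Fin n)) : Prop :=
  IsUnit A.det ∧ IsNMatrixFirst A⁻¹ J

def InJ {n : ℕ} (J : Finset (Fin n)) (x : Fin n → ℝ) : Prop :=
  (∀ j ∈ J, 0 < x j) ∧ (∀ j ∉ J, x j < 0)

def Semipos {p q : Type*} [Fintype q] (M : Matrix p q ℝ) : Prop :=
  ∃ x : q → ℝ, (∀ j, 0 ≤ x j) ∧ ∀ i, 0 < M.mulVec x i

def MinSemipos {m n : ℕ} (M : Matrix (Fin m) (Fin n) ℝ) : Prop :=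
  Semipos M ∧
  ∀ j₀ : Fin n, ¬ Semipos (M.submatrix id (fun j : {j : Fin n // j ≠ j₀} => (j : Fin n)))

/-!
If every `C ∈ I(A,B)` failed at some row, then, since `I(A,B)` is an entrywise product of
intervals, taking row `i` from a matrix that fails at row `i` gives one `D ∈ I(A,B)` with
`x i * (D x) i ≤ 0` for all `i`: `D` reverses the sign of `x`. An N-matrix `D` with negative
entries cannot reverse the sign of a vector `x` of mixed signs. Rescaling the positive part of `x`
gives a sign-reversed `y` with `(D y) p = 0` for some `p`; the Schur complement of `D` at `p`,
whose principal minors are those of `D` divided by `D p p < 0`, is then a P-matrix reversing the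
sign of the nonzero restriction of `y`. This contradicts the Fiedler–Pták theorem: on the
support of a sign-reversed vector, `T + diagonal d` would be singular for some `d ≥ 0`, while
`det (T + diagonal d) > 0` for every P-matrix `T`.
-/

open Function

section PrincipalMinors

variable {ι : Type}

def HasPosPrincipalMinors (A : Matrix ι ι ℝ) : Prop :=
  ∀ (κ : Type) [Fintype κ] [DecidableEq κ] (f : κ → ι), Injective f →
    0 < (A.submatrix f f).det

def HasNegPrincipalMinors (A : Matrix ι ι ℝ) : Prop :=
  ∀ (κ : Type) [Fintype κ] [DecidableEq κ] [Nonempty κ] (f : κ → ι), Injective f →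
    (A.submatrix f f).det < 0

variable {A : Matrix ι ι ℝ}

theorem HasPosPrincipalMinors.submatrix (hA : HasPosPrincipalMinors A) {κ : Type} {g : κ → ι}
    (hg : Injective g) : HasPosPrincipalMinors (A.submatrix g g) := by
  intro _ _ _ f hf
  rw [submatrix_submatrix]
  exact hA _ _ (hg.comp hf)

theorem HasPosPrincipalMinors.det_pos [Fintype ι] [DecidableEq ι]
    (hA : HasPosPrincipalMinors A) : 0 < A.det :=
  hA ι id injective_id

theorem HasNegPrincipalMinors.diag_neg (hA : HasNegPrincipalMinors A) (i : ι) : A i i < 0 := by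
  simpa using hA Unit (fun _ => i) fun _ _ _ => rfl

theorem HasNegPrincipalMinors.apply_neg (hA : HasNegPrincipalMinors A) (hle : ∀ i j, A i j ≤ 0)
    (i j : ι) : A i j < 0 := by
  rcases eq_or_ne i j with rfl | hij
  · exact hA.diag_neg i
  have hinj : Injective ![i, j] := by
    intro a b hab
    fin_cases a <;> fin_cases b <;> simp_all [eq_comm]
  have hminor := hA (Fin 2) ![i, j] hinj
  rw [det_fin_two] at hminor
  simp only [submatrix_apply, cons_val_zero, cons_val_one] at hminor
  nlinarith [hA.diag_neg i, hA.diag_neg j, hle i j, hle j i]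

theorem IsNMatrix.hasNegPrincipalMinors {n : ℕ} {A : Matrix (Fin n) (Fin n) ℝ}
    (hA : IsNMatrix A) : HasNegPrincipalMinors A := by
  intro κ _ _ _ f hf
  let e : κ ≃ Finset.univ.image f := (Equiv.ofInjective f hf).trans
    (Equiv.subtypeEquivRight fun i => by simp [eq_comm])
  have hsub : A.submatrix f f
      = (A.submatrix ((↑) : Finset.univ.image f → Fin n) (↑)).submatrix e e := rfl
  rw [hsub, det_submatrix_equiv_self]
  exact hA _ (Finset.univ_nonempty.image f)

end PrincipalMinors

section Determinant

variable {ι : Type} [Fintype ι]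

theorem det_updateRow_single_one [DecidableEq ι] {R : Type} [CommRing R] (M : Matrix ι ι R)
    (a : ι) :
    (M.updateRow a (Pi.single a 1)).det
      = (M.submatrix ((↑) : {i // i ≠ a} → ι) ((↑) : {i // i ≠ a} → ι)).det := by
  have : Unique {i // i = a} := ⟨⟨⟨a, rfl⟩⟩, fun b => Subtype.ext b.2⟩
  let e : {i // i = a} ⊕ {i // i ≠ a} ≃ ι := Equiv.sumCompl (· = a)
  rw [← det_submatrix_equiv_self e]
  have hblock : (M.updateRow a (Pi.single a 1)).submatrix e e =
      fromBlocks (of fun _ _ => 1) 0 (of fun (i : {i // i ≠ a}) (_ : {i // i = a}) => M i a)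
        (M.submatrix ((↑) : {i // i ≠ a} → ι) ((↑) : {i // i ≠ a} → ι)) := by
    ext (i | i) (j | j) <;> simp [e, updateRow_apply, i.2, j.2]
  rw [hblock, det_fromBlocks_zero₁₂, det_unique]
  simp

theorem det_add_diagonal_single [DecidableEq ι] {R : Type} [CommRing R] (M : Matrix ι ι R)
    (a : ι) (c : R) :
    (M + diagonal (Pi.single a c)).det
      = M.det + c * (M.submatrix ((↑) : {i // i ≠ a} → ι) ((↑) : {i // i ≠ a} → ι)).det := by
  have hrow : M + diagonal (Pi.single a c) = M.updateRow a (M a + c • Pi.single a 1) := by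
    ext i j
    by_cases hi : i = a
    · subst hi
      rcases eq_or_ne j i with rfl | hj
      · simp
      · simp [hj, hj.symm]
    · simp [diagonal_apply, hi]
  rw [hrow, det_updateRow_add, updateRow_eq_self, det_updateRow_smul, det_updateRow_single_one]

theorem submatrix_support_mulVec {R : Type} [NonUnitalNonAssocSemiring R] [DecidableEq R]
    (M : Matrix ι ι R) (x : ι → R) (i : {i // x i ≠ 0}) :
    (M.submatrix Subtype.val Subtype.val *ᵥ fun j : {j // x j ≠ 0} => x j) i = (M *ᵥ x) i := by
  simp only [mulVec, dotProduct, submatrix_apply]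
  rw [← Finset.sum_subtype (Finset.univ.filter fun j => x j ≠ 0) (fun j => by simp)
    (fun j => M i j * x j)]
  exact Finset.sum_filter_of_ne fun j _ h => right_ne_zero_of_mul h

end Determinant

section SchurComplement

variable {ι : Type} {K : Type} [Field K]

noncomputable def schurComplementAt (A : Matrix ι ι K) (p : ι) :
    Matrix {i // i ≠ p} {i // i ≠ p} K :=
  of fun i j => A i j - A i p * A p j / A p p

theorem det_submatrix_sumElim_eq_mul_det_schurComplementAt (A : Matrix ι ι K) {p : ι}
    (hp : A p p ≠ 0) {κ : Type} [Fintype κ] [DecidableEq κ] (f : κ → {i // i ≠ p}) :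
    let g : Unit ⊕ κ → ι := Sum.elim (fun _ => p) ((↑) ∘ f)
    (A.submatrix g g).det = A p p * ((schurComplementAt A p).submatrix f f).det := by
  intro g
  let _ : Invertible (of fun _ _ => A p p : Matrix Unit Unit K) :=
    ⟨of fun _ _ => (A p p)⁻¹, by ext; simp [mul_apply, hp], by ext; simp [mul_apply, hp]⟩
  have hblock : A.submatrix g g = fromBlocks (of fun _ _ => A p p) (of fun _ j => A p (f j))
      (of fun i _ => A (f i) p) (A.submatrix ((↑) ∘ f) ((↑) ∘ f)) := by
    ext (i | i) (j | j) <;> rfl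
  rw [hblock, det_fromBlocks₁₁, det_unique]
  congr 2
  ext i j
  simp [schurComplementAt, mul_apply, invOf_eq_nonsing_inv, div_eq_mul_inv]
  ring

theorem HasNegPrincipalMinors.hasPosPrincipalMinors_schurComplementAt
    {A : Matrix ι ι ℝ} (hA : HasNegPrincipalMinors A) (p : ι) :
    HasPosPrincipalMinors (schurComplementAt A p) := by
  intro κ _ _ f hf
  have hg : Injective (Sum.elim (fun _ : Unit => p) (Subtype.val ∘ f)) := by
    rintro (a | a) (b | b) hab
    · rfl
    · exact absurd hab.symm (f b).2
    · exact absurd hab (f a).2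
    · exact congrArg Sum.inr (hf (Subtype.ext hab))
  have hminor := hA _ _ hg
  rw [det_submatrix_sumElim_eq_mul_det_schurComplementAt A (hA.diag_neg p).ne] at hminor
  exact pos_of_mul_neg_right hminor (hA.diag_neg p).le

theorem schurComplementAt_mulVec [Fintype ι] [DecidableEq ι] (A : Matrix ι ι K) {p : ι}
    (hp : A p p ≠ 0) (y : ι → K) (i : {i // i ≠ p}) :
    (schurComplementAt A p *ᵥ fun j => y j) i = (A *ᵥ y) i - A i p / A p p * (A *ᵥ y) p := by
  simp only [mulVec, dotProduct, Fintype.sum_eq_add_sum_subtype_ne _ p, schurComplementAt,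
    of_apply]
  simp only [sub_mul, Finset.sum_sub_distrib, mul_add, Finset.mul_sum]
  field_simp
  ring

end SchurComplement

section SignReversal

variable {ι : Type} [Fintype ι] {A : Matrix ι ι ℝ}

def ReversesSign (A : Matrix ι ι ℝ) (x : ι → ℝ) : Prop :=
  ∀ i, x i * (A *ᵥ x) i ≤ 0

theorem HasPosPrincipalMinors.det_add_diagonal_pos [DecidableEq ι]
    (hA : HasPosPrincipalMinors A) {d : ι → ℝ} (hd : 0 ≤ d) : 0 < (A + diagonal d).det := by
  induction hcard : Fintype.card ι using Nat.strong_induction_on generalizing ι with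
  | _ n ih =>
  suffices ∀ s : Finset ι, 0 < (A + diagonal (∑ a ∈ s, Pi.single a (d a))).det by
    simpa [Finset.univ_sum_single] using this Finset.univ
  intro s
  induction s using Finset.induction_on with
  | empty => simpa using hA.det_pos
  | insert a s ha ih_s =>
    set e := ∑ a ∈ s, Pi.single a (d a)
    have he : 0 ≤ e := Finset.sum_nonneg fun a _ => Pi.single_nonneg.2 (hd a)
    have hminor : 0 < ((A + diagonal e).submatrix ((↑) : {i // i ≠ a} → ι) (↑)).det := by
      rw [show (A + diagonal e).submatrix Subtype.val Subtype.val
          = A.submatrix Subtype.val Subtype.val + diagonal (e ∘ Subtype.val) by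
        rw [← submatrix_diagonal _ _ Subtype.val_injective]; rfl]
      refine ih _ ?_ (hA.submatrix Subtype.val_injective) (fun i => he i) rfl
      rw [← hcard]
      exact Fintype.card_subtype_lt (x := a) (by simp)
    have hsplit : A + diagonal (∑ b ∈ insert a s, Pi.single b (d b))
        = A + diagonal e + diagonal (Pi.single a (d a)) := by
      rw [Finset.sum_insert ha, add_assoc, diagonal_add, add_comm (Pi.single a _)]
      rfl
    rw [hsplit, det_add_diagonal_single]
    exact add_pos_of_pos_of_nonneg ih_s (mul_nonneg (hd a) hminor.le)

theorem HasPosPrincipalMinors.not_reversesSign [DecidableEq ι] (hA : HasPosPrincipalMinors A)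
    {x : ι → ℝ} (hx : x ≠ 0) : ¬ ReversesSign A x := by
  intro hrev
  let d : {i // x i ≠ 0} → ℝ := fun i => -(x i * (A *ᵥ x) i) / x i ^ 2
  have hd : 0 ≤ d := fun i => div_nonneg (neg_nonneg.2 (hrev i)) (sq_nonneg _)
  have hker : (A.submatrix (↑) (↑) + diagonal d) *ᵥ (fun i : {i // x i ≠ 0} => x i) = 0 := by
    ext i
    have hxi : x i ≠ 0 := i.2
    rw [add_mulVec, Pi.add_apply, submatrix_support_mulVec, mulVec_diagonal, Pi.zero_apply]
    simp only [d]
    field_simp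
    ring
  have hne : (fun i : {i // x i ≠ 0} => x i) ≠ 0 := by
    obtain ⟨j, hj⟩ := Function.ne_iff.1 hx
    exact fun h => hj (congrFun h ⟨j, hj⟩)
  exact (det_add_diagonal_pos (hA.submatrix Subtype.val_injective) hd).ne'
    (exists_mulVec_eq_zero_iff.1 ⟨_, hne, hker⟩)

theorem mulVec_apply_neg_of_forall_neg (hA : ∀ i j, A i j < 0) {w : ι → ℝ} (hw : 0 ≤ w)
    (hw0 : w ≠ 0) (i : ι) : (A *ᵥ w) i < 0 := by
  obtain ⟨j, hj⟩ := Function.ne_iff.1 hw0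
  exact Finset.sum_neg' (fun k _ => mul_nonpos_of_nonpos_of_nonneg (hA i k).le (hw k))
    ⟨j, Finset.mem_univ j, mul_neg_of_neg_of_pos (hA i j) ((hw j).lt_of_ne' hj)⟩

theorem ReversesSign.smul_posPart_sub_negPart {x : ι → ℝ} (hx : ReversesSign A x)
    (hu : ∀ i, (A *ᵥ x⁺) i ≤ 0) {c : ℝ} (hc₀ : 0 ≤ c) (hc₁ : c ≤ 1)
    (hc : ∀ i, 0 < x i → c * (A *ᵥ x⁺) i ≤ (A *ᵥ x⁻) i) : ReversesSign A (c • x⁺ - x⁻) := by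
  intro i
  have hxi : x i * ((A *ᵥ x⁺) i - (A *ᵥ x⁻) i) ≤ 0 := by
    rw [← Pi.sub_apply, ← mulVec_sub, posPart_sub_negPart]
    exact hx i
  rw [mulVec_sub, mulVec_smul]
  simp only [Pi.sub_apply, Pi.smul_apply, smul_eq_mul]
  rcases lt_trichotomy (x i) 0 with hi | hi | hi
  · have hyi : c * x⁺ i - x⁻ i = x i := by simp [hi.le]
    have hcu : (A *ᵥ x⁺) i ≤ c * (A *ᵥ x⁺) i := by nlinarith [hu i]
    rw [hyi]
    exact mul_nonpos_of_nonpos_of_nonneg hi.le (by linarith [nonneg_of_mul_nonpos_right hxi hi])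
  · simp [hi]
  · have hyi : c * x⁺ i - x⁻ i = c * x i := by simp [hi.le]
    rw [hyi]
    exact mul_nonpos_of_nonneg_of_nonpos (by positivity) (by linarith [hc i hi])

theorem exists_reversesSign_mulVec_eq_zero (hA : ∀ i j, A i j < 0) {x : ι → ℝ} {p₀ q : ι}
    (hp₀ : 0 < x p₀) (hq : x q < 0) (hx : ReversesSign A x) :
    ∃ (y : ι → ℝ) (p : ι), p ≠ q ∧ y q ≠ 0 ∧ ReversesSign A y ∧ (A *ᵥ y) p = 0 := by
  set u := A *ᵥ x⁺
  set v := A *ᵥ x⁻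
  have hu : ∀ i, u i < 0 := mulVec_apply_neg_of_forall_neg hA (posPart_nonneg x)
    (Function.ne_iff.2 ⟨p₀, by simp [hp₀]⟩)
  have hv : ∀ i, v i < 0 := mulVec_apply_neg_of_forall_neg hA (negPart_nonneg x)
    (Function.ne_iff.2 ⟨q, by simp [hq]⟩)
  obtain ⟨p, hp, hmax⟩ := (Finset.univ.filter fun i => 0 < x i).exists_max_image
    (fun i => v i / u i) ⟨p₀, by simp [hp₀]⟩
  have hxp : 0 < x p := by simpa using hp
  have hc₁ : v p / u p ≤ 1 := by
    have hxp' : x p * (u p - v p) ≤ 0 := by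
      rw [← Pi.sub_apply, ← mulVec_sub, posPart_sub_negPart]
      exact hx p
    exact (div_le_one_of_neg (hu p)).2 (by linarith [nonpos_of_mul_nonpos_right hxp' hxp])
  refine ⟨(v p / u p) • x⁺ - x⁻, p, ne_of_apply_ne x (hxp.trans' hq).ne',
    by simp [hq.le, hq.ne], ?_, ?_⟩
  · refine hx.smul_posPart_sub_negPart (fun i => (hu i).le)
      (div_pos_of_neg_of_neg (hv p) (hu p)).le hc₁ fun i hi => ?_
    exact (div_le_iff_of_neg (hu i)).1 (hmax i (by simpa using hi))
  · rw [mulVec_sub, mulVec_smul, Pi.sub_apply, Pi.smul_apply, smul_eq_mul,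
      div_mul_cancel₀ _ (hu p).ne, sub_self]

theorem HasNegPrincipalMinors.not_reversesSign [DecidableEq ι] (hA : HasNegPrincipalMinors A)
    (hle : ∀ i j, A i j ≤ 0) {x : ι → ℝ} {p q : ι} (hp : 0 < x p) (hq : x q < 0) :
    ¬ ReversesSign A x := by
  intro hx
  obtain ⟨y, p, hpq, hyq, hy, hAy⟩ :=
    exists_reversesSign_mulVec_eq_zero (hA.apply_neg hle) hp hq hx
  refine (hA.hasPosPrincipalMinors_schurComplementAt p).not_reversesSign
    (x := fun i : {i // i ≠ p} => y i) (fun h => hyq (congrFun h ⟨q, hpq.symm⟩)) fun i => ?_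
  rw [schurComplementAt_mulVec A (hA.diag_neg p).ne, hAy, mul_zero, sub_zero]
  exact hy i

end SignReversal

theorem IntervalHull.of_rows {m n : ℕ} {A B : Matrix (Fin m) (Fin n) ℝ}
    {C : Fin m → Matrix (Fin m) (Fin n) ℝ} (hC : ∀ i, C i ∈ IntervalHull A B) :
    (of fun i => C i i) ∈ IntervalHull A B :=
  fun i j => hC i i j

theorem stmt7 {n : ℕ} (A B : Matrix (Fin n) (Fin n) ℝ)
    (h : ∀ C ∈ IntervalHull A B, IsNMatrixSecond C) :
    ∀ x : Fin n → ℝ, x ≠ 0 → ¬ (∀ i, x i ≤ 0) → ¬ (∀ i, 0 ≤ x i) →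
      ∃ i, ∀ C ∈ IntervalHull A B, 0 < x i * C.mulVec x i := by
  intro x _ hle hge
  obtain ⟨p, hp⟩ : ∃ p, 0 < x p := by simpa using hle
  obtain ⟨q, hq⟩ : ∃ q, x q < 0 := by simpa using hge
  by_contra! hrev
  choose C hC hCx using hrev
  obtain ⟨hN, hle⟩ := h _ (IntervalHull.of_rows hC)
  exact hN.hasNegPrincipalMinors.not_reversesSign hle hp hq hCx
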